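/- Let T be a locally compact, separable and metrisable topological space, let d ∈ M^T, let ε > 0, let K ⊆ T be a compact subset, let {K_1, …, K_m} be a partition of K into nonempty clopen subsets with D(K_i) < ε/2 for all i (diameter with respect to d), and let d_K be a metric on K compatible with its topology such that sup_{(x,y)∈K²} |d_K(x,y) − d(x,y)| < ε and d_K(x,y) = D(K_i, K_j) whenever x ∈ K_i, y ∈ K_j, i ≠ j (where D(K_i,K_j) = sup{d(u,v) : u ∈ K_i, v ∈ K_j}). Set C = K ∪ {x ∈ T : d(x,K) ≥ ε}, and define d_C : C² → [0,∞) by: d_C(x,y) = d_K(x,y) if x,y ∈ K; d_C(x,y) = D(x, K_i) + ε/2 if x ∈ C\K and y ∈ K_i (where D(x,K_i) = sup{d(x,u) : u ∈ K_i}); d_C(x,y) = D(y, K_i) + ε/2 if x ∈ K_i and y ∈ C\K; and d_C(x,y) = d(x,y) if x,y ∈ C\K. Then d_C is a proper metric on C compatible with the subspace topology of C, i.e. d_C ∈ M^C. -/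

import Mathlib

/-!
Case analysis on which points lie in `K` reduces the metric axioms for `d_C` to those of `d` and
`d_K` and to the estimates `d(y, u) ≤ D(y, K_i)` for `u ∈ K_i`; the only place where
`|d_K - d| < ε` enters is comparing two points of `K` through a point outside `K`, where
`d_K(x, z) < d(x, z) + ε ≤ d(y, x) + d(y, z) + ε ≤ d_C(x, y) + d_C(y, z)`.
Points of `C` on different sides of `K` are at distance at least `ε` both for `d` and for `d_C`,
so small `d_C`-balls are small `d_K`-balls or traces of small `d`-balls, which gives
compatibility. Finally `d ≤ d_C + ε`, so a closed `d_C`-ball is a closed subset of the trace on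
the closed set `C` of a compact `d`-ball.
-/

/-- `d` is a metric (as a raw function). -/
def IsMetric {T : Type*} (d : T → T → ℝ) : Prop :=
  (∀ x y, d x y = 0 ↔ x = y) ∧ (∀ x y, d x y = d y x) ∧ ∀ x y z, d x z ≤ d x y + d y z

/-- `d` induces the topology of `T`. -/
def Compatible (T : Type*) [TopologicalSpace T] (d : T → T → ℝ) : Prop :=
  ∀ s : Set T, IsOpen s ↔ ∀ x ∈ s, ∃ ε > 0, ∀ y, d x y < ε → y ∈ s

/-- `d` is a proper metric on `T` compatible with its topology, i.e. `d ∈ M^T`. -/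
def ProperCompatMetric (T : Type*) [TopologicalSpace T] (d : T → T → ℝ) : Prop :=
  IsMetric d ∧ Compatible T d ∧ ∀ (x : T) (r : ℝ), IsCompact {y : T | d x y ≤ r}

/-- The uniform (truncated) distance `ρ_T` on functions on `T²`. -/
noncomputable def rhoT (T : Type*) (f g : T → T → ℝ) : ℝ :=
  ⨆ p : T × T, min 1 |f p.1 p.2 - g p.1 p.2|

/-- `f` is `K`-Lipschitz with respect to the raw metric `d`. -/
def LipWith {M : Type*} (d : M → M → ℝ) (K : ℝ) (f : M → ℝ) : Prop :=
  ∀ x y, |f x - f y| ≤ K * d x y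

/-- `D(A,B) = sup {d x y : x ∈ A, y ∈ B}`. -/
noncomputable def supD {T : Type*} (d : T → T → ℝ) (A B : Set T) : ℝ :=
  sSup {r : ℝ | ∃ x ∈ A, ∃ y ∈ B, r = d x y}

/-- `d(x,A) = inf {d x y : y ∈ A}`. -/
noncomputable def infD {T : Type*} (d : T → T → ℝ) (x : T) (A : Set T) : ℝ :=
  sInf {r : ℝ | ∃ y ∈ A, r = d x y}

open Set Filter Topology

section supD

variable {X : Type*} {d : X → X → ℝ} {A B : Set X} {x y : X} {c : ℝ}

theorem le_supD (hAB : BddAbove (image2 d A B)) (hx : x ∈ A) (hy : y ∈ B) :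
    d x y ≤ supD d A B := by
  refine le_csSup (hAB.mono ?_) ⟨x, hx, y, hy, rfl⟩
  rintro _ ⟨a, ha, b, hb, rfl⟩
  exact mem_image2_of_mem ha hb

theorem supD_le (hA : A.Nonempty) (hB : B.Nonempty) (h : ∀ a ∈ A, ∀ b ∈ B, d a b ≤ c) :
    supD d A B ≤ c := by
  obtain ⟨a, ha⟩ := hA
  obtain ⟨b, hb⟩ := hB
  refine csSup_le ⟨_, a, ha, b, hb, rfl⟩ ?_
  rintro _ ⟨a, ha, b, hb, rfl⟩
  exact h a ha b hb

theorem infD_le (h0 : ∀ y, 0 ≤ d x y) (hy : y ∈ A) : infD d x A ≤ d x y :=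
  csInf_le ⟨0, by rintro _ ⟨z, -, rfl⟩; exact h0 z⟩ ⟨y, hy, rfl⟩

theorem le_infD (hA : A.Nonempty) (h : ∀ y ∈ A, c ≤ d x y) : c ≤ infD d x A := by
  obtain ⟨y, hy⟩ := hA
  refine le_csInf ⟨_, y, hy, rfl⟩ ?_
  rintro _ ⟨z, hz, rfl⟩
  exact h z hz

end supD

namespace IsMetric

variable {X : Type*} {d : X → X → ℝ} {A B : Set X} {u x y : X}

theorem eq_zero_iff (hd : IsMetric d) : d x y = 0 ↔ x = y := hd.1 x y

theorem symm (hd : IsMetric d) (x y : X) : d x y = d y x := hd.2.1 x y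

theorem triangle (hd : IsMetric d) (x y z : X) : d x z ≤ d x y + d y z := hd.2.2 x y z

theorem self (hd : IsMetric d) (x : X) : d x x = 0 := hd.eq_zero_iff.2 rfl

theorem nonneg (hd : IsMetric d) (x y : X) : 0 ≤ d x y := by
  linarith [hd.triangle x y x, hd.self x, hd.symm x y]

theorem lipWith_one (hd : IsMetric d) (x : X) : LipWith d 1 (d x) := fun y z => by
  rw [one_mul, abs_sub_le_iff]
  constructor <;> linarith [hd.triangle x z y, hd.triangle x y z, hd.symm y z]

theorem infD_le_add (hd : IsMetric d) (A : Set X) (x y : X) :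
    infD d x A ≤ d x y + infD d y A := by
  rcases A.eq_empty_or_nonempty with rfl | hA
  · simpa [infD] using hd.nonneg x y
  rw [← sub_le_iff_le_add']
  exact le_infD hA fun z hz => by
    linarith [infD_le (hd.nonneg x) hz, hd.triangle x y z]

theorem lipWith_infD (hd : IsMetric d) (A : Set X) : LipWith d 1 (fun x => infD d x A) :=
  fun x y => by
    rw [one_mul, abs_sub_le_iff]
    constructor <;> linarith [hd.infD_le_add A x y, hd.infD_le_add A y x, hd.symm x y]

theorem le_supD_singleton (hd : IsMetric d) (hA : BddAbove (image2 d A A)) (hu : u ∈ A) :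
    d x u ≤ supD d {x} A := by
  obtain ⟨N, hN⟩ := hA
  refine le_supD ⟨d x u + N, forall_mem_image2.2 fun a ha v hv => ?_⟩ (mem_singleton x) hu
  rw [mem_singleton_iff.1 ha]
  linarith [hd.triangle x u v, hN (mem_image2_of_mem hu hv)]

theorem supD_singleton_le_add (hd : IsMetric d) (hA : BddAbove (image2 d A A))
    (hA' : A.Nonempty) : supD d {x} A ≤ d x y + supD d {y} A :=
  supD_le (singleton_nonempty x) hA' fun a ha v hv => by
    rw [mem_singleton_iff.1 ha]
    linarith [hd.triangle x y v, hd.le_supD_singleton (x := y) hA hv]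

theorem supD_singleton_le_add_supD (hd : IsMetric d) (hA : BddAbove (image2 d A A))
    (hBA : BddAbove (image2 d B A)) (hA' : A.Nonempty) (hB' : B.Nonempty) :
    supD d {x} B ≤ supD d {x} A + supD d B A := by
  obtain ⟨u, hu⟩ := hA'
  refine supD_le (singleton_nonempty x) hB' fun a ha v hv => ?_
  rw [mem_singleton_iff.1 ha]
  linarith [hd.triangle x u v, hd.symm u v, hd.le_supD_singleton (x := x) hA hu,
    le_supD hBA hv hu]

end IsMetric

namespace Compatible

variable {X : Type*} [TopologicalSpace X] {d : X → X → ℝ}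

theorem continuous (hc : Compatible X d) (hd : IsMetric d) {L : ℝ} {f : X → ℝ}
    (hf : LipWith d L f) : Continuous f := by
  refine continuous_def.2 fun V hV => (hc _).2 fun x hx => ?_
  obtain ⟨η, hη, hηV⟩ := Metric.isOpen_iff.1 hV (f x) hx
  refine ⟨η / (|L| + 1), by positivity, fun y hy => hηV ?_⟩
  have hLd : |L| * d x y < η := by
    rw [lt_div_iff₀ (by positivity)] at hy
    nlinarith [hd.nonneg x y]
  rw [Metric.mem_ball, Real.dist_eq, abs_sub_comm]
  exact (hf x y).trans_lt
    ((mul_le_mul_of_nonneg_right (le_abs_self L) (hd.nonneg x y)).trans_lt hLd)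

theorem isOpen_ball (hc : Compatible X d) (hd : IsMetric d) (x : X) (r : ℝ) :
    IsOpen {y | d x y < r} :=
  isOpen_lt (hc.continuous hd (hd.lipWith_one x)) continuous_const

theorem hasBasis_nhds (hc : Compatible X d) (hd : IsMetric d) (x : X) :
    (𝓝 x).HasBasis (fun r : ℝ => 0 < r) fun r => {y | d x y < r} := by
  refine ⟨fun t => ⟨fun ht => ?_, fun ⟨r, hr, hrt⟩ => ?_⟩⟩
  · obtain ⟨U, hUt, hU, hxU⟩ := mem_nhds_iff.1 ht
    obtain ⟨r, hr, hrU⟩ := (hc U).1 hU x hxU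
    exact ⟨r, hr, fun y hy => hUt (hrU y hy)⟩
  · refine mem_of_superset ((hc.isOpen_ball hd x r).mem_nhds ?_) hrt
    simpa [hd.self x] using hr

theorem bddAbove_image2 (hc : Compatible X d) (hd : IsMetric d) {K : Set X} (hK : IsCompact K) :
    BddAbove (image2 d K K) := by
  rcases K.eq_empty_or_nonempty with rfl | ⟨x₀, hx₀⟩
  · simp
  obtain ⟨N, hN⟩ := hK.bddAbove_image (hc.continuous hd (hd.lipWith_one x₀)).continuousOn
  refine ⟨N + N, forall_mem_image2.2 fun u hu v hv => ?_⟩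
  linarith [hd.triangle u x₀ v, hd.symm u x₀, hN (mem_image_of_mem _ hu),
    hN (mem_image_of_mem _ hv)]

end Compatible

theorem compatible_of_hasBasis_nhds {X : Type*} [TopologicalSpace X] {d : X → X → ℝ}
    (h : ∀ x, (𝓝 x).HasBasis (fun r : ℝ => 0 < r) fun r => {y | d x y < r}) :
    Compatible X d := fun s => by
  rw [isOpen_iff_mem_nhds]
  exact forall₂_congr fun x _ => (h x).mem_iff

theorem isCompact_setOf_le_of_dist_le_add {T : Type*} [TopologicalSpace T] {d : T → T → ℝ}
    (hdp : ∀ (x : T) (r : ℝ), IsCompact {y | d x y ≤ r}) {C : Set T} (hC : IsClosed C)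
    {ρ : C → C → ℝ} (hρ : IsMetric ρ) (hρc : Compatible C ρ) {c : ℝ}
    (hle : ∀ x y : C, d x y ≤ ρ x y + c) (x : C) (r : ℝ) : IsCompact {y : C | ρ x y ≤ r} :=
  (hC.isClosedEmbedding_subtypeVal.isCompact_preimage (hdp x (r + c))).of_isClosed_subset
    (isClosed_le (hρc.continuous hρ (hρ.lipWith_one x)) continuous_const)
    fun y (hy : ρ x y ≤ r) => show d x y ≤ r + c by linarith [hle x y]

section Gluing

variable {T ι : Type*} {d : T → T → ℝ} {ε : ℝ} {K C : Set T} {Ki : ι → Set T}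
  {dK : K → K → ℝ} {dC : C → C → ℝ}

theorem compatible_glue [TopologicalSpace T] (hd : IsMetric d) (hdc : Compatible T d)
    (hdK : IsMetric dK) (hdKc : Compatible K dK) (hdC : IsMetric dC) (hε : 0 < ε)
    (hfar : ∀ x : C, x.1 ∉ K → ∀ u ∈ K, ε ≤ d x u)
    (hcross : ∀ x y : C, x.1 ∈ K → y.1 ∉ K → ε ≤ dC x y)
    (hdC1 : ∀ (x y : C) (hx : x.1 ∈ K) (hy : y.1 ∈ K), dC x y = dK ⟨x, hx⟩ ⟨y, hy⟩)
    (hdC4 : ∀ x y : C, x.1 ∉ K → y.1 ∉ K → dC x y = d x y) : Compatible C dC := by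
  have mem_iff_of_dist_lt : ∀ x y : C, d x y < ε → (x.1 ∈ K ↔ y.1 ∈ K) := fun x y h =>
    ⟨fun hx => by_contra fun hy => by linarith [hfar y hy x hx, hd.symm x y],
      fun hy => by_contra fun hx => by linarith [hfar x hx y hy]⟩
  have mem_iff_of_dC_lt : ∀ x y : C, dC x y < ε → (x.1 ∈ K ↔ y.1 ∈ K) := fun x y h =>
    ⟨fun hx => by_contra fun hy => by linarith [hcross x y hx hy],
      fun hy => by_contra fun hx => by linarith [hcross y x hy hx, hdC.symm x y]⟩
  refine compatible_of_hasBasis_nhds fun x => ?_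
  rw [nhds_subtype]
  by_cases hx : x.1 ∈ K
  · have hK := hdKc.hasBasis_nhds hdK ⟨x, hx⟩
    rw [nhds_subtype] at hK
    refine ⟨fun t => ⟨fun ⟨U, hU, hUt⟩ => ?_, fun ⟨r, hr, hrt⟩ => ?_⟩⟩
    · obtain ⟨r, hr, hrU⟩ := hK.mem_iff.1 (preimage_mem_comap hU)
      refine ⟨min r ε, lt_min hr hε, fun y hy => hUt ?_⟩
      have hyK := (mem_iff_of_dC_lt x y (hy.trans_le (min_le_right _ _))).1 hx
      refine hrU (show dK ⟨x, hx⟩ ⟨y, hyK⟩ < r from ?_)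
      rw [← hdC1]
      exact hy.trans_le (min_le_left _ _)
    · obtain ⟨U, hU, hUr⟩ := mem_comap.1 (hK.mem_iff.2 ⟨r, hr, subset_rfl⟩)
      have hxε : x.1 ∈ {y | d x y < ε} := by simpa [hd.self] using hε
      refine ⟨U ∩ {y | d x y < ε}, inter_mem hU ((hdc.isOpen_ball hd _ _).mem_nhds hxε),
        fun y ⟨hyU, hyε⟩ => hrt ?_⟩
      have hyK := (mem_iff_of_dist_lt x y hyε).1 hx
      show dC x y < r
      rw [hdC1 x y hx hyK]
      exact hUr (show (⟨y, hyK⟩ : K).1 ∈ U from hyU)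
  · refine ((hdc.hasBasis_nhds hd x).comap Subtype.val).to_hasBasis
      (fun r hr => ⟨min r ε, lt_min hr hε, fun y hy => ?_⟩)
      (fun r hr => ⟨min r ε, lt_min hr hε, fun y hy => ?_⟩)
    · have hyK := mt (mem_iff_of_dC_lt x y (hy.trans_le (min_le_right _ _))).2 hx
      show d x y < r
      rw [← hdC4 x y hx hyK]
      exact hy.trans_le (min_le_left _ _)
    · have hyK := mt (mem_iff_of_dist_lt x y (hy.trans_le (min_le_right _ _))).2 hx
      show dC x y < r
      rw [hdC4 x y hx hyK]
      exact hy.trans_le (min_le_left _ _)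

theorem gluedMetric_symm (hd : IsMetric d) (hdK : IsMetric dK) (hcover : K ⊆ ⋃ i, Ki i)
    (hdC1 : ∀ (x y : C) (hx : x.1 ∈ K) (hy : y.1 ∈ K), dC x y = dK ⟨x, hx⟩ ⟨y, hy⟩)
    (hdC2 : ∀ x y : C, x.1 ∉ K → ∀ i, y.1 ∈ Ki i → dC x y = supD d {x.1} (Ki i) + ε / 2)
    (hdC3 : ∀ x y : C, y.1 ∉ K → ∀ i, x.1 ∈ Ki i → dC x y = supD d {y.1} (Ki i) + ε / 2)
    (hdC4 : ∀ x y : C, x.1 ∉ K → y.1 ∉ K → dC x y = d x y) (x y : C) : dC x y = dC y x := by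
  by_cases hx : x.1 ∈ K <;> by_cases hy : y.1 ∈ K
  · rw [hdC1 x y hx hy, hdC1 y x hy hx, hdK.symm]
  · obtain ⟨i, hi⟩ := mem_iUnion.1 (hcover hx)
    rw [hdC3 x y hy i hi, hdC2 y x hy i hi]
  · obtain ⟨i, hi⟩ := mem_iUnion.1 (hcover hy)
    rw [hdC2 x y hx i hi, hdC3 y x hx i hi]
  · rw [hdC4 x y hx hy, hdC4 y x hy hx, hd.symm]

theorem dist_add_half_le_gluedMetric (hd : IsMetric d) (hKb : BddAbove (image2 d K K))
    (hsub : ∀ i, Ki i ⊆ K) (hcover : K ⊆ ⋃ i, Ki i)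
    (hdC3 : ∀ x y : C, y.1 ∉ K → ∀ i, x.1 ∈ Ki i → dC x y = supD d {y.1} (Ki i) + ε / 2)
    {x y : C} (hx : x.1 ∈ K) (hy : y.1 ∉ K) : d y x + ε / 2 ≤ dC x y := by
  obtain ⟨i, hi⟩ := mem_iUnion.1 (hcover hx)
  rw [hdC3 x y hy i hi]
  gcongr
  exact hd.le_supD_singleton (hKb.mono (image2_subset (hsub i) (hsub i))) hi

theorem gluedMetric_eq_zero_iff (hd : IsMetric d) (hdK : IsMetric dK) (hε : 0 < ε)
    (hsymm : ∀ x y : C, dC x y = dC y x)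
    (hcross : ∀ x y : C, x.1 ∈ K → y.1 ∉ K → ε ≤ dC x y)
    (hdC1 : ∀ (x y : C) (hx : x.1 ∈ K) (hy : y.1 ∈ K), dC x y = dK ⟨x, hx⟩ ⟨y, hy⟩)
    (hdC4 : ∀ x y : C, x.1 ∉ K → y.1 ∉ K → dC x y = d x y) (x y : C) :
    dC x y = 0 ↔ x = y := by
  by_cases hx : x.1 ∈ K <;> by_cases hy : y.1 ∈ K
  · rw [hdC1 x y hx hy, hdK.eq_zero_iff, Subtype.mk.injEq, Subtype.val_inj]
  · exact iff_of_false (hε.trans_le (hcross x y hx hy)).ne' fun h => hy (h ▸ hx)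
  · rw [hsymm]
    exact iff_of_false (hε.trans_le (hcross y x hy hx)).ne' fun h => hx (h ▸ hy)
  · rw [hdC4 x y hx hy, hd.eq_zero_iff, Subtype.val_inj]

theorem gluedMetric_triangle (hd : IsMetric d) (hdK : IsMetric dK)
    (hKb : BddAbove (image2 d K K)) (hε : 0 ≤ ε) (hsub : ∀ i, Ki i ⊆ K)
    (hne : ∀ i, (Ki i).Nonempty) (hcover : K ⊆ ⋃ i, Ki i) (hclose : ∀ x y : K, |dK x y - d x y| < ε)
    (heq : ∀ i j, i ≠ j → ∀ x y : K, x.1 ∈ Ki i → y.1 ∈ Ki j → dK x y = supD d (Ki i) (Ki j))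
    (hsymm : ∀ x y : C, dC x y = dC y x)
    (hdC1 : ∀ (x y : C) (hx : x.1 ∈ K) (hy : y.1 ∈ K), dC x y = dK ⟨x, hx⟩ ⟨y, hy⟩)
    (hdC3 : ∀ x y : C, y.1 ∉ K → ∀ i, x.1 ∈ Ki i → dC x y = supD d {y.1} (Ki i) + ε / 2)
    (hdC4 : ∀ x y : C, x.1 ∉ K → y.1 ∉ K → dC x y = d x y) (x y z : C) :
    dC x z ≤ dC x y + dC y z := by
  have hbdd i j : BddAbove (image2 d (Ki i) (Ki j)) := hKb.mono (image2_subset (hsub i) (hsub j))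
  have hmixed {x y : C} (hx : x.1 ∈ K) (hy : y.1 ∉ K) : d y x + ε / 2 ≤ dC x y :=
    dist_add_half_le_gluedMetric hd hKb hsub hcover hdC3 hx hy
  wlog hxz : ¬(x.1 ∉ K ∧ z.1 ∈ K) generalizing x z
  · rw [hsymm x z, hsymm x y, hsymm y z, add_comm]
    exact this z x (by tauto)
  by_cases hx : x.1 ∈ K <;> by_cases hy : y.1 ∈ K <;> by_cases hz : z.1 ∈ K
  · rw [hdC1 x z hx hz, hdC1 x y hx hy, hdC1 y z hy hz]
    exact hdK.triangle _ _ _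
  · obtain ⟨i, hi⟩ := mem_iUnion.1 (hcover hx)
    obtain ⟨j, hj⟩ := mem_iUnion.1 (hcover hy)
    rw [hdC3 x z hz i hi, hdC1 x y hx hy, hdC3 y z hz j hj]
    rcases eq_or_ne i j with rfl | hij
    · linarith [hdK.nonneg ⟨x, hx⟩ ⟨y, hy⟩]
    · rw [heq i j hij _ _ hi hj]
      linarith [hd.supD_singleton_le_add_supD (x := z.1) (hbdd j j) (hbdd i j) (hne j) (hne i)]
  · have hxz := (abs_lt.1 (hclose ⟨x, hx⟩ ⟨z, hz⟩)).2
    rw [hdC1 x z hx hz, hsymm y z]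
    linarith [hmixed hx hy, hmixed hz hy, hd.triangle x y z, hd.symm x y]
  · obtain ⟨i, hi⟩ := mem_iUnion.1 (hcover hx)
    rw [hdC3 x z hz i hi, hdC3 x y hy i hi, hdC4 y z hy hz]
    linarith [hd.supD_singleton_le_add (x := z.1) (y := y.1) (hbdd i i) (hne i), hd.symm y z]
  · exact absurd ⟨hx, hz⟩ hxz
  · rw [hdC4 x z hx hz, hsymm x y]
    linarith [hmixed hy hx, hmixed hy hz, hd.triangle x y z, hd.symm y z]
  · exact absurd ⟨hx, hz⟩ hxz
  · rw [hdC4 x z hx hz, hdC4 x y hx hy, hdC4 y z hy hz]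
    exact hd.triangle _ _ _

theorem dist_le_gluedMetric_add (hd : IsMetric d) (hKb : BddAbove (image2 d K K)) (hε : 0 ≤ ε)
    (hsub : ∀ i, Ki i ⊆ K) (hcover : K ⊆ ⋃ i, Ki i) (hclose : ∀ x y : K, |dK x y - d x y| < ε)
    (hsymm : ∀ x y : C, dC x y = dC y x)
    (hdC1 : ∀ (x y : C) (hx : x.1 ∈ K) (hy : y.1 ∈ K), dC x y = dK ⟨x, hx⟩ ⟨y, hy⟩)
    (hdC3 : ∀ x y : C, y.1 ∉ K → ∀ i, x.1 ∈ Ki i → dC x y = supD d {y.1} (Ki i) + ε / 2)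
    (hdC4 : ∀ x y : C, x.1 ∉ K → y.1 ∉ K → dC x y = d x y) (x y : C) :
    d x y ≤ dC x y + ε := by
  by_cases hx : x.1 ∈ K <;> by_cases hy : y.1 ∈ K
  · rw [hdC1 x y hx hy]
    linarith [(abs_lt.1 (hclose ⟨x, hx⟩ ⟨y, hy⟩)).1]
  · linarith [dist_add_half_le_gluedMetric hd hKb hsub hcover hdC3 hx hy, hd.symm x y]
  · linarith [dist_add_half_le_gluedMetric hd hKb hsub hcover hdC3 hy hx, hsymm x y]
  · linarith [hdC4 x y hx hy]

theorem abs_sub_lt_of_sSup_lt [TopologicalSpace T] (hd : IsMetric d) (hdc : Compatible T d)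
    (hdK : IsMetric dK) (hdKc : Compatible K dK) (hK : IsCompact K)
    (hclose : sSup {r : ℝ | ∃ x y : K, r = |dK x y - d x y|} < ε) (x y : K) :
    |dK x y - d x y| < ε := by
  have := isCompact_iff_compactSpace.1 hK
  obtain ⟨N, hN⟩ := hdc.bddAbove_image2 hd hK
  obtain ⟨NK, hNK⟩ := hdKc.bddAbove_image2 hdK isCompact_univ
  have hb : BddAbove {r : ℝ | ∃ x y : K, r = |dK x y - d x y|} := by
    refine ⟨max NK N, ?_⟩
    rintro _ ⟨a, b, rfl⟩
    exact abs_sub_le_of_nonneg_of_le (hdK.nonneg a b)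
      ((hNK (mem_image2_of_mem trivial trivial)).trans (le_max_left _ _)) (hd.nonneg a b)
      ((hN (mem_image2_of_mem a.2 b.2)).trans (le_max_right _ _))
  exact (le_csSup hb ⟨x, y, rfl⟩).trans_lt hclose

end Gluing

theorem stmt10_general
    {T : Type*} [TopologicalSpace T]
    [TopologicalSpace.MetrizableSpace T]
    (d : T → T → ℝ) (hd : ProperCompatMetric T d) (ε : ℝ) (hε : 0 < ε)
    (K : Set T) (hKcpt : IsCompact K)
    (m : ℕ) (Ki : Fin m → Set T)
    (hsub : ∀ i, Ki i ⊆ K) (hne : ∀ i, (Ki i).Nonempty)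
    (hcover : (⋃ i, Ki i) = K)
    (dK : ↥K → ↥K → ℝ) (hdK : IsMetric dK) (hdKc : Compatible ↥K dK)
    (hclose : sSup {r : ℝ | ∃ x y : ↥K, r = |dK x y - d (x : T) (y : T)|} < ε)
    (heq : ∀ i j, i ≠ j → ∀ x y : ↥K, (x : T) ∈ Ki i → (y : T) ∈ Ki j →
      dK x y = supD d (Ki i) (Ki j))
    (C : Set T) (hC : C = K ∪ {x : T | ε ≤ infD d x K})
    (dC : ↥C → ↥C → ℝ)
    (hdC1 : ∀ (x y : ↥C) (hx : (x : T) ∈ K) (hy : (y : T) ∈ K),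
      dC x y = dK ⟨(x : T), hx⟩ ⟨(y : T), hy⟩)
    (hdC2 : ∀ x y : ↥C, (x : T) ∉ K → ∀ i, (y : T) ∈ Ki i →
      dC x y = supD d {(x : T)} (Ki i) + ε / 2)
    (hdC3 : ∀ x y : ↥C, (y : T) ∉ K → ∀ i, (x : T) ∈ Ki i →
      dC x y = supD d {(y : T)} (Ki i) + ε / 2)
    (hdC4 : ∀ x y : ↥C, (x : T) ∉ K → (y : T) ∉ K → dC x y = d (x : T) (y : T))
    : ProperCompatMetric ↥C dC := by
  obtain ⟨hdm, hdc, hdp⟩ := hd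
  have hKb := hdc.bddAbove_image2 hdm hKcpt
  have hclose' := abs_sub_lt_of_sSup_lt hdm hdc hdK hdKc hKcpt hclose
  have hfar : ∀ x : C, x.1 ∉ K → ∀ u ∈ K, ε ≤ d x u := fun x hx u hu =>
    ((hC.le x.2).resolve_left hx : ε ≤ infD d x K).trans (infD_le (hdm.nonneg x) hu)
  have hsymm := gluedMetric_symm hdm hdK hcover.ge hdC1 hdC2 hdC3 hdC4
  have hcross : ∀ x y : C, x.1 ∈ K → y.1 ∉ K → ε ≤ dC x y := fun x y hx hy => by
    linarith [dist_add_half_le_gluedMetric hdm hKb hsub hcover.ge hdC3 hx hy, hfar y hy x hx]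
  have hdCm : IsMetric dC :=
    ⟨gluedMetric_eq_zero_iff hdm hdK hε hsymm hcross hdC1 hdC4, hsymm,
      gluedMetric_triangle hdm hdK hKb hε.le hsub hne hcover.ge hclose' heq hsymm hdC1 hdC3 hdC4⟩
  have hdCc := compatible_glue hdm hdc hdK hdKc hdCm hε hfar hcross hdC1 hdC4
  have hCclosed : IsClosed C := by
    rw [hC]
    exact hKcpt.isClosed.union
      (isClosed_le continuous_const (hdc.continuous hdm (hdm.lipWith_infD K)))
  exact ⟨hdCm, hdCc, isCompact_setOf_le_of_dist_le_add hdp hCclosed hdCm hdCc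
    (dist_le_gluedMetric_add hdm hKb hε.le hsub hcover.ge hclose' hsymm hdC1 hdC3 hdC4)⟩

/-- **Statement 10.** The metric `d_C` built from `d_K` on `K` and `d` outside `K` is a
proper metric on `C = K ∪ {x : d(x,K) ≥ ε}` compatible with its subspace topology. -/
theorem stmt10
    {T : Type*} [TopologicalSpace T] [LocallyCompactSpace T]
    [TopologicalSpace.SeparableSpace T] [TopologicalSpace.MetrizableSpace T]
    (d : T → T → ℝ) (hd : ProperCompatMetric T d) (ε : ℝ) (hε : 0 < ε)
    (K : Set T) (hKcpt : IsCompact K)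
    (m : ℕ) (hm : 0 < m) (Ki : Fin m → Set T)
    (hsub : ∀ i, Ki i ⊆ K) (hne : ∀ i, (Ki i).Nonempty)
    (hdisj : ∀ i j, i ≠ j → Disjoint (Ki i) (Ki j)) (hcover : (⋃ i, Ki i) = K)
    (hclopen : ∀ i, IsClopen {x : ↥K | (x : T) ∈ Ki i})
    (hdiam : ∀ i, supD d (Ki i) (Ki i) < ε / 2)
    (dK : ↥K → ↥K → ℝ) (hdK : IsMetric dK) (hdKc : Compatible ↥K dK)
    (hclose : sSup {r : ℝ | ∃ x y : ↥K, r = |dK x y - d (x : T) (y : T)|} < ε)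
    (heq : ∀ i j, i ≠ j → ∀ x y : ↥K, (x : T) ∈ Ki i → (y : T) ∈ Ki j →
      dK x y = supD d (Ki i) (Ki j))
    (C : Set T) (hC : C = K ∪ {x : T | ε ≤ infD d x K})
    (dC : ↥C → ↥C → ℝ)
    (hdC1 : ∀ (x y : ↥C) (hx : (x : T) ∈ K) (hy : (y : T) ∈ K),
      dC x y = dK ⟨(x : T), hx⟩ ⟨(y : T), hy⟩)
    (hdC2 : ∀ x y : ↥C, (x : T) ∉ K → ∀ i, (y : T) ∈ Ki i →
      dC x y = supD d {(x : T)} (Ki i) + ε / 2)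
    (hdC3 : ∀ x y : ↥C, (y : T) ∉ K → ∀ i, (x : T) ∈ Ki i →
      dC x y = supD d {(y : T)} (Ki i) + ε / 2)
    (hdC4 : ∀ x y : ↥C, (x : T) ∉ K → (y : T) ∉ K → dC x y = d (x : T) (y : T))
    : ProperCompatMetric ↥C dC :=
  stmt10_general d hd ε hε K hKcpt m Ki hsub hne hcover dK hdK hdKc hclose heq C hC dC hdC1 hdC2
    hdC3 hdC4
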